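/- Let Y = X + N with X having a density and N ~ N(0, σ_N²) independent of X. Then d/dy E[X | Y = y] = Var[X | Y = y]/σ_N², for all y ∈ ℝ. -/

import Mathlib

open Real Set MeasureTheory Filter

/-- Standard normal density. -/
noncomputable def stdGaussPDF (x : ℝ) : ℝ := (Real.sqrt (2 * Real.pi))⁻¹ * Real.exp (-x ^ 2 / 2)

/-- Gaussian conditional density `f_{Y|X=x}(y)` for the mechanism `Y = X + N`. -/
noncomputable def condPDF (σN x y : ℝ) : ℝ := (1 / σN) * stdGaussPDF ((y - x) / σN)

/-- Marginal density of `Y = X + N`. -/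
noncomputable def margPDF (σN : ℝ) (fX : ℝ → ℝ) (y : ℝ) : ℝ := ∫ x, fX x * condPDF σN x y

/-- Posterior mean `E[X | Y = y]`. -/
noncomputable def postMean (σN : ℝ) (fX : ℝ → ℝ) (y : ℝ) : ℝ :=
  (∫ x, x * fX x * condPDF σN x y) / margPDF σN fX y

/-- Posterior variance `Var[X | Y = y]`. -/
noncomputable def postVar (σN : ℝ) (fX : ℝ → ℝ) (y : ℝ) : ℝ :=
  (∫ x, (x - postMean σN fX y) ^ 2 * fX x * condPDF σN x y) / margPDF σN fX y

/- ### Auxiliary lemmas -/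

lemma stdGauss_pos (x : ℝ) : 0 < stdGaussPDF x := by
  unfold stdGaussPDF
  have := Real.pi_pos
  positivity

lemma condPDF_pos {σN : ℝ} (hσ : 0 < σN) (x y : ℝ) : 0 < condPDF σN x y := by
  unfold condPDF
  have := stdGauss_pos ((y - x) / σN)
  positivity

lemma pow_mul_gauss_le (m : ℕ) (t : ℝ) :
    |t| ^ m * Real.exp (-t ^ 2 / 2) ≤ m.factorial * Real.exp (1 / 2) := by
  have h1 : |t| ^ m ≤ m.factorial * Real.exp |t| := by
    have hs := Real.sum_le_exp_of_nonneg (abs_nonneg t) (m + 1)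
    have hterm : |t| ^ m / m.factorial ≤ ∑ i ∈ Finset.range (m + 1), |t| ^ i / i.factorial :=
      Finset.single_le_sum (f := fun i => |t| ^ i / (i.factorial : ℝ))
        (fun i _ => by positivity) (Finset.self_mem_range_succ m)
    have hm : (0 : ℝ) < m.factorial := by exact_mod_cast m.factorial_pos
    have := hterm.trans hs
    calc |t| ^ m = (|t| ^ m / m.factorial) * m.factorial := by field_simp
    _ ≤ Real.exp |t| * m.factorial := by
        apply mul_le_mul_of_nonneg_right this hm.le
    _ = m.factorial * Real.exp |t| := by ring
  have h2 : Real.exp |t| * Real.exp (-t ^ 2 / 2) ≤ Real.exp (1 / 2) := by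
    rw [← Real.exp_add, Real.exp_le_exp]
    nlinarith [sq_nonneg (|t| - 1), sq_abs t]
  have h3 : (0:ℝ) ≤ Real.exp (-t ^ 2 / 2) := (Real.exp_pos _).le
  calc |t| ^ m * Real.exp (-t ^ 2 / 2) ≤ (m.factorial * Real.exp |t|) * Real.exp (-t ^ 2 / 2) :=
        mul_le_mul_of_nonneg_right h1 h3
  _ = m.factorial * (Real.exp |t| * Real.exp (-t ^ 2 / 2)) := by ring
  _ ≤ m.factorial * Real.exp (1/2) := by
      have hm : (0:ℝ) ≤ m.factorial := by positivity
      exact mul_le_mul_of_nonneg_left h2 hm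

lemma condPDF_moment {σN : ℝ} (hσ : 0 < σN) (m : ℕ) :
    ∃ C, 0 ≤ C ∧ ∀ x y : ℝ, |y - x| ^ m * condPDF σN x y ≤ C := by
  refine ⟨σN ^ m * (1 / σN) * (Real.sqrt (2 * Real.pi))⁻¹ * (m.factorial * Real.exp (1/2)),
    by positivity, fun x y => ?_⟩
  set t := (y - x) / σN with ht
  have habs : |y - x| = σN * |t| := by
    rw [ht, abs_div, abs_of_pos hσ]; field_simp
  have hle := pow_mul_gauss_le m t
  have heq : |y - x| ^ m * condPDF σN x y
      = σN ^ m * (1 / σN) * (Real.sqrt (2 * Real.pi))⁻¹ * (|t| ^ m * Real.exp (-t ^ 2 / 2)) := by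
    rw [habs]; unfold condPDF stdGaussPDF; rw [← ht]; ring
  rw [heq]
  have hc : (0:ℝ) ≤ σN ^ m * (1 / σN) * (Real.sqrt (2 * Real.pi))⁻¹ := by
    have := Real.pi_pos; positivity
  exact mul_le_mul_of_nonneg_left hle hc

lemma master_bound {σN : ℝ} (hσ : 0 < σN) (k m : ℕ) (R : ℝ) (hR : 0 ≤ R) :
    ∃ C, 0 ≤ C ∧ ∀ x y : ℝ, |y| ≤ R → |x| ^ k * |y - x| ^ m * condPDF σN x y ≤ C := by
  obtain ⟨C1, hC1n, hC1⟩ := condPDF_moment hσ m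
  obtain ⟨C2, hC2n, hC2⟩ := condPDF_moment hσ (k + m)
  refine ⟨2 ^ k * (R ^ k * C1 + C2), by positivity, fun x y hy => ?_⟩
  set u := |y - x| with hu
  have hun : 0 ≤ u := abs_nonneg _
  have hg := (condPDF_pos hσ x y).le
  have hx : |x| ≤ R + u := by
    have h : |x| = |y - (y - x)| := by congr 1; ring
    rw [h]
    calc |y - (y - x)| ≤ |y| + |y - x| := abs_sub _ _
    _ ≤ R + u := by rw [← hu]; linarith
  have h1 : |x| ^ k ≤ (R + u) ^ k := pow_le_pow_left₀ (abs_nonneg x) hx k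
  have h2 : (R + u) ^ k ≤ 2 ^ k * (R ^ k + u ^ k) := by
    have hmax : R + u ≤ 2 * max R u := by
      rcases le_total R u with h | h
      · rw [max_eq_right h]; linarith
      · rw [max_eq_left h]; linarith
    calc (R + u) ^ k ≤ (2 * max R u) ^ k := pow_le_pow_left₀ (by linarith) hmax k
    _ = 2 ^ k * (max R u) ^ k := by rw [mul_pow]
    _ ≤ 2 ^ k * (R ^ k + u ^ k) := by
        apply mul_le_mul_of_nonneg_left _ (by positivity)
        rcases le_total R u with h | h
        · rw [max_eq_right h]; have : (0:ℝ) ≤ R ^ k := by positivity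
          linarith
        · rw [max_eq_left h]; have : (0:ℝ) ≤ u ^ k := by positivity
          linarith
  have key1 : u ^ m * condPDF σN x y ≤ C1 := hC1 x y
  have key2 : u ^ k * (u ^ m * condPDF σN x y) ≤ C2 := by
    have h := hC2 x y
    rw [← hu] at h
    calc u ^ k * (u ^ m * condPDF σN x y) = u ^ (k + m) * condPDF σN x y := by
          rw [pow_add]; ring
    _ ≤ C2 := h
  have hmg : 0 ≤ u ^ m * condPDF σN x y := by positivity
  calc |x| ^ k * u ^ m * condPDF σN x y = |x| ^ k * (u ^ m * condPDF σN x y) := by ring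
  _ ≤ 2 ^ k * (R ^ k + u ^ k) * (u ^ m * condPDF σN x y) :=
      mul_le_mul_of_nonneg_right (h1.trans h2) hmg
  _ = 2 ^ k * (R ^ k * (u ^ m * condPDF σN x y) + u ^ k * (u ^ m * condPDF σN x y)) := by ring
  _ ≤ 2 ^ k * (R ^ k * C1 + C2) := by
      apply mul_le_mul_of_nonneg_left _ (by positivity)
      have := mul_le_mul_of_nonneg_left key1 (by positivity : (0:ℝ) ≤ R ^ k)
      linarith

lemma cont_cond_x {σN : ℝ} (y : ℝ) : Continuous (fun x => condPDF σN x y) := by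
  unfold condPDF stdGaussPDF
  fun_prop

lemma cont_cond_x' {σN : ℝ} (y : ℝ) :
    Continuous (fun x => (x - y) / σN ^ 2 * condPDF σN x y) := by
  unfold condPDF stdGaussPDF
  fun_prop

lemma hasDeriv_cond {σN : ℝ} (hσ : 0 < σN) (x y : ℝ) :
    HasDerivAt (fun y => condPDF σN x y) ((x - y) / σN ^ 2 * condPDF σN x y) y := by
  have hσ' : σN ≠ 0 := hσ.ne'
  have h1 : HasDerivAt (fun y : ℝ => -((y - x) / σN) ^ 2 / 2) (-((y - x) / σN ^ 2)) y := by
    have h0 : HasDerivAt (fun y : ℝ => (y - x) / σN) (1 / σN) y :=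
      ((hasDerivAt_id y).sub_const x).div_const σN
    have h2 := (((h0.pow 2).neg).div_const 2)
    refine h2.congr_deriv ?_
    norm_num
    field_simp
  have h3 := h1.exp
  have h4 := (h3.const_mul ((1 / σN) * (Real.sqrt (2 * Real.pi))⁻¹))
  have e : (fun y => condPDF σN x y) = fun y => (1 / σN) * (Real.sqrt (2 * Real.pi))⁻¹ * Real.exp (-((y - x) / σN) ^ 2 / 2) := by
    funext y'; unfold condPDF stdGaussPDF; ring
  rw [e]
  refine h4.congr_deriv ?_
  · unfold condPDF stdGaussPDF
    field_simp
    ring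

/-- Auxiliary: `k`-th moment-type integral. -/
noncomputable def momInt (σN : ℝ) (fX : ℝ → ℝ) (k : ℕ) (y : ℝ) : ℝ :=
  ∫ x, x ^ k * fX x * condPDF σN x y

section
variable {σN : ℝ} (hσ : 0 < σN) {fX : ℝ → ℝ} (hmeas : Measurable fX)
  (hnn : ∀ x, 0 ≤ fX x) (hint : ∫ x, fX x = 1)

include hint in
lemma fX_integrable : Integrable fX := by
  by_contra h
  rw [integral_undef h] at hint
  exact one_ne_zero hint.symm

include hσ hint in
omit hmeas in
lemma integrable_pow_mul (k : ℕ) (y : ℝ) :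
    Integrable (fun x => x ^ k * fX x * condPDF σN x y) := by
  obtain ⟨C, hCn, hC⟩ := master_bound hσ k 0 |y| (abs_nonneg y)
  have hb : ∀ x, ‖x ^ k * condPDF σN x y‖ ≤ C := by
    intro x
    have h := hC x y le_rfl
    simp only [pow_zero, one_mul] at h
    rw [Real.norm_eq_abs, abs_mul, abs_pow, abs_of_pos (condPDF_pos hσ x y)]
    calc |x| ^ k * condPDF σN x y = |x| ^ k * 1 * condPDF σN x y := by ring
    _ ≤ C := by simpa using h
  have hm : AEStronglyMeasurable (fun x => x ^ k * condPDF σN x y) volume :=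
    ((continuous_pow k).mul (cont_cond_x y)).aestronglyMeasurable
  have := (fX_integrable hint).bdd_mul hm (ae_of_all _ hb)
  exact this.congr (ae_of_all _ fun x => by ring)

include hσ hnn hint in
omit hmeas in
lemma marg_pos (y : ℝ) : 0 < ∫ x, fX x * condPDF σN x y := by
  have hi : Integrable (fun x => fX x * condPDF σN x y) := by
    have := integrable_pow_mul hσ hint 0 y
    simpa using this
  rw [integral_pos_iff_support_of_nonneg
    (fun x => mul_nonneg (hnn x) (condPDF_pos hσ x y).le) hi]
  have hsupp : Function.support (fun x => fX x * condPDF σN x y) = Function.support fX := by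
    ext x
    simp only [Function.mem_support, mul_ne_zero_iff]
    exact ⟨fun h => h.1, fun h => ⟨h, (condPDF_pos hσ x y).ne'⟩⟩
  rw [hsupp]
  by_contra h
  push_neg at h
  have h0 : volume (Function.support fX) = 0 := le_antisymm h zero_le
  have hae : fX =ᵐ[volume] 0 := by
    rw [Filter.EventuallyEq, ae_iff]
    simpa [Function.support] using h0
  have : (∫ x, fX x) = 0 := by
    rw [integral_congr_ae hae]; simp
  rw [hint] at this
  exact one_ne_zero this

include hσ hmeas hnn hint in
lemma hasDeriv_momInt (k : ℕ) (y₀ : ℝ) :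
    HasDerivAt (momInt σN fX k)
      ((momInt σN fX (k + 1) y₀ - y₀ * momInt σN fX k y₀) / σN ^ 2) y₀ := by
  have hσ2 : (0:ℝ) < σN ^ 2 := by positivity
  obtain ⟨C, hCn, hC⟩ := master_bound hσ k 1 (|y₀| + 1) (by positivity)
  set F' : ℝ → ℝ → ℝ := fun y x => x ^ k * fX x * ((x - y) / σN ^ 2 * condPDF σN x y) with hF'
  have hmeasy : ∀ y : ℝ, AEStronglyMeasurable (fun x => x ^ k * fX x * condPDF σN x y) volume :=
    fun y => (((measurable_id.pow_const k).mul hmeas).mul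
      (cont_cond_x y).measurable).aestronglyMeasurable
  have key := hasDerivAt_integral_of_dominated_loc_of_deriv_le (μ := volume)
    (F := fun y x => x ^ k * fX x * condPDF σN x y) (F' := F')
    (bound := fun x => fX x * (C / σN ^ 2)) (x₀ := y₀) (Metric.ball_mem_nhds y₀ one_pos)
    (Filter.Eventually.of_forall hmeasy)
    (integrable_pow_mul hσ hint k y₀)
    ((((measurable_id.pow_const k).mul hmeas).mul
      (cont_cond_x' y₀).measurable).aestronglyMeasurable)
    (ae_of_all _ fun x y hy => by
      have hyR : |y| ≤ |y₀| + 1 := by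
        have := mem_ball_iff_norm.mp hy
        rw [Real.norm_eq_abs] at this
        calc |y| = |(y - y₀) + y₀| := by ring_nf
        _ ≤ |y - y₀| + |y₀| := abs_add_le _ _
        _ ≤ |y₀| + 1 := by linarith
      have hbd := hC x y hyR
      rw [pow_one] at hbd
      have hnorm : ‖F' y x‖ = |x| ^ k * |y - x| * condPDF σN x y * fX x / σN ^ 2 := by
        rw [hF']
        simp only
        rw [Real.norm_eq_abs, abs_mul, abs_mul, abs_mul, abs_div, abs_pow,
          abs_of_nonneg (hnn x), abs_of_pos (condPDF_pos hσ x y),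
          abs_of_pos hσ2, abs_sub_comm x y]
        ring
      rw [hnorm]
      have h1 : |x| ^ k * |y - x| * condPDF σN x y * fX x ≤ C * fX x :=
        mul_le_mul_of_nonneg_right hbd (hnn x)
      calc |x| ^ k * |y - x| * condPDF σN x y * fX x / σN ^ 2
          ≤ C * fX x / σN ^ 2 := (div_le_div_iff_of_pos_right hσ2).mpr h1
      _ = fX x * (C / σN ^ 2) := by ring)
    ((fX_integrable hint).mul_const (C / σN ^ 2))
    (ae_of_all _ fun x y _ => (hasDeriv_cond hσ x y).const_mul (x ^ k * fX x))
  have hres := key.2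
  have hfun : momInt σN fX k = fun y => ∫ x, x ^ k * fX x * condPDF σN x y := rfl
  rw [hfun]
  refine hres.congr_deriv ?_
  have hrw : F' y₀ = fun x => (x ^ (k + 1) * fX x * condPDF σN x y₀) * (σN ^ 2)⁻¹
      - (x ^ k * fX x * condPDF σN x y₀) * (y₀ * (σN ^ 2)⁻¹) := by
    funext x
    rw [hF']
    simp only
    rw [pow_succ]
    field_simp
    ring
  rw [hrw, integral_sub ((integrable_pow_mul hσ hint (k + 1) y₀).mul_const _)
      ((integrable_pow_mul hσ hint k y₀).mul_const _),
    integral_mul_const, integral_mul_const]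
  unfold momInt
  field_simp

end

/-- Derivative of the posterior mean: `d/dy E[X | Y = y] = Var[X | Y = y]/σ_N²`. -/
theorem deriv_postMean (σN : ℝ) (hσN : 0 < σN) (fX : ℝ → ℝ)
    (hmeas : Measurable fX) (hnn : ∀ x, 0 ≤ fX x) (hint : ∫ x, fX x = 1) :
    ∀ y : ℝ, deriv (postMean σN fX) y = postVar σN fX y / σN ^ 2 := by
  intro y
  have hσ2 : (0:ℝ) < σN ^ 2 := by positivity
  have hI0 : ∀ z, momInt σN fX 0 z = margPDF σN fX z := by
    intro z; unfold momInt margPDF; simp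
  have hI1 : ∀ z, momInt σN fX 1 z = ∫ x, x * fX x * condPDF σN x z := by
    intro z; unfold momInt; simp
  have hDpos : 0 < momInt σN fX 0 y := by
    rw [hI0]; exact marg_pos hσN hnn hint y
  have hD0 : momInt σN fX 0 y ≠ 0 := hDpos.ne'
  have hpm : postMean σN fX = fun z => momInt σN fX 1 z / momInt σN fX 0 z := by
    funext z; unfold postMean margPDF; rw [hI1, hI0]; unfold margPDF; rfl
  have hd1 := hasDeriv_momInt hσN hmeas hnn hint 1 y
  have hd0 := hasDeriv_momInt hσN hmeas hnn hint 0 y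
  have hder : HasDerivAt (postMean σN fX)
      (((momInt σN fX 2 y - y * momInt σN fX 1 y) / σN ^ 2 * momInt σN fX 0 y
        - momInt σN fX 1 y * ((momInt σN fX 1 y - y * momInt σN fX 0 y) / σN ^ 2))
        / (momInt σN fX 0 y) ^ 2) y := by
    rw [hpm]
    exact hd1.div hd0 hD0
  rw [hder.deriv]
  set m := postMean σN fX y with hmdef
  have hm : m = momInt σN fX 1 y / momInt σN fX 0 y := by
    rw [hmdef, hpm]
  have hexp : (∫ x, (x - m) ^ 2 * fX x * condPDF σN x y)
      = momInt σN fX 2 y - momInt σN fX 1 y * (2 * m) + momInt σN fX 0 y * m ^ 2 := by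
    have e1 : (fun x => (x - m) ^ 2 * fX x * condPDF σN x y)
        = fun x => (x ^ 2 * fX x * condPDF σN x y
            - (x ^ 1 * fX x * condPDF σN x y) * (2 * m))
          + (x ^ 0 * fX x * condPDF σN x y) * m ^ 2 := by
      funext x; ring
    have i2 := integrable_pow_mul hσN hint 2 y
    have i1 : Integrable (fun x => (x ^ 1 * fX x * condPDF σN x y) * (2 * m)) :=
      (integrable_pow_mul hσN hint 1 y).mul_const (2 * m)
    have i0 : Integrable (fun x => (x ^ 0 * fX x * condPDF σN x y) * m ^ 2) :=
      (integrable_pow_mul hσN hint 0 y).mul_const (m ^ 2)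
    have iSub : Integrable (fun x => x ^ 2 * fX x * condPDF σN x y
        - (x ^ 1 * fX x * condPDF σN x y) * (2 * m)) := i2.sub i1
    rw [e1, integral_add iSub i0, integral_sub i2 i1, integral_mul_const, integral_mul_const]
    rfl
  have hVar : postVar σN fX y
      = (momInt σN fX 2 y - momInt σN fX 1 y * (2 * m) + momInt σN fX 0 y * m ^ 2)
        / momInt σN fX 0 y := by
    unfold postVar
    rw [← hmdef, hexp, hI0]
  rw [hVar, hm]
  field_simp
  ring
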